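/- arXiv:1301.1453 — 2 statements merged into one kernel-verified Lean document; each statement's English description precedes it below -/
import Mathlib

section
/- Let $p, q$ be distinct primes, $1 \le \ell$ and $0 \le k \le \ell-1$. In the Burnside ring $R_\ell$ of $C_{p^\ell}$, there is no ideal strictly between $J_{\ell,k+1}(q)$ and $J_{\ell,k}(q)$: any ideal $I$ with $J_{\ell,k+1}(q) \subseteq I \subseteq J_{\ell,k}(q)$ equals $J_{\ell,k+1}(q)$ or $J_{\ell,k}(q)$. -/
/-! We model the Burnside ring of the cyclic group `C_{p^ℓ}` via its (injective) mark
homomorphism: `Xe p ℓ i` is the vector of marks of the transitive `C_{p^ℓ}`-set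
`C_{p^ℓ}/C_{p^i}`, namely `j ↦ #(fixed points of C_{p^j})`, stabilized for `j ≥ ℓ`.
The Burnside ring `BR p ℓ` is the subring of `ℕ → ℤ` generated by these mark vectors. -/

/-- Marks of the basis element `X_{ℓ,i} = [C_{p^ℓ}/C_{p^i}]`. -/
def Xe (p l i : ℕ) : ℕ → ℤ := fun j => if min j l ≤ i then (p : ℤ) ^ (l - i) else 0

/-- The Burnside ring of `C_{p^ℓ}`, realized as a subring of the ghost ring `ℕ → ℤ`. -/
def BR (p l : ℕ) : Subring (ℕ → ℤ) := Subring.closure (Set.range (Xe p l))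

/-- The basis element `X_{ℓ,i}` as an element of the Burnside ring. -/
def Xb (p l i : ℕ) : BR p l := ⟨Xe p l i, Subring.subset_closure ⟨i, rfl⟩⟩

/-- `F_{ℓ,i} = X_{ℓ,i} - p^{ℓ-i}` in the Burnside ring. -/
def Fb (p l i : ℕ) : BR p l := Xb p l i - (p : BR p l) ^ (l - i)

/-- `F_{ℓ,i} = X_{ℓ,i} - p^{ℓ-i}` as a mark vector. -/
def Fe (p l i : ℕ) : ℕ → ℤ := Xe p l i - (p : ℕ → ℤ) ^ (l - i)

/-- Restriction `res^ℓ_k` to the subgroup `C_{p^k}` on mark vectors: truncation of marks. -/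
def resA (k : ℕ) : (ℕ → ℤ) →+* (ℕ → ℤ) :=
  Pi.ringHom fun j => Pi.evalRingHom (fun _ => ℤ) (min j k)

/-- Additive transfer (induction) `ind^{m+1}_m` on mark vectors. -/
def indA (p m : ℕ) (a : ℕ → ℤ) : ℕ → ℤ := fun j => if j ≤ m then p * a j else 0

/-- Multiplicative transfer (norm) `jnd^{m+1}_m` on mark vectors. -/
def jndA (p m : ℕ) (a : ℕ → ℤ) : ℕ → ℤ := fun j => if j ≤ m then (a j) ^ p else a m

/-- The ideal `J_{ℓ,k}(x) = (x, F_{ℓ,k}, …, F_{ℓ,ℓ-1})` of the Burnside ring. -/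
def Jb (p l k : ℕ) (x : ℤ) : Ideal (BR p l) :=
  Ideal.span (insert (x : BR p l) (Fb p l '' Set.Ico k l))

/-! Every element of `R_ℓ` has the form `n + ∑ dᵢ F_{ℓ,i}`: the `F_{ℓ,i}` together with `1` span a
subring, because `F_{ℓ,i} F_{ℓ,j} = -p^{ℓ-i} F_{ℓ,j}` for `i ≤ j`. Such an element has mark `n` at `0`,
and its mark drops by `dᵢ p^{ℓ-i}` from `i` to `i+1`. As `q ∤ p`, this shows that `J_{ℓ,k}(q)` is the
ideal of elements whose marks at `0, …, k` are divisible by `q`, so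
`J_{ℓ,k+1}(q) = J_{ℓ,k}(q) ⊓ M` with `M` the pullback of `qℤ` along the (surjective) mark at `k+1`,
a maximal ideal. Finally, for `M` maximal no ideal lies strictly between `A ⊓ M` and `A`: if
`I ≤ A` is not contained in `M` then `M ⊔ I = ⊤`, whence `A = AM ⊔ AI ≤ I`. -/

theorem Ideal.IsMaximal.eq_inf_or_eq_of_le {R : Type*} [CommSemiring R] {M A I : Ideal R}
    (hM : M.IsMaximal) (h₁ : A ⊓ M ≤ I) (h₂ : I ≤ A) : I = A ⊓ M ∨ I = A := by
  by_cases hIM : I ≤ M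
  · exact .inl (le_antisymm (le_inf h₂ hIM) h₁)
  · refine .inr (le_antisymm h₂ ?_)
    have hMI : M ⊔ I = ⊤ := hM.out.2 _ (left_lt_sup.mpr hIM)
    calc A = A * (M ⊔ I) := by rw [hMI, Ideal.mul_top]
      _ = A * M ⊔ A * I := Ideal.mul_sup _ _ _
      _ ≤ I := sup_le (Ideal.mul_le_inf.trans h₁) Ideal.mul_le_right

section BurnsideRing

variable {p l : ℕ}

theorem Fe_apply (p l i j : ℕ) : Fe p l i j = if min j l ≤ i then 0 else -(p : ℤ) ^ (l - i) := by
  simp only [Fe, Xe, Pi.sub_apply, Pi.pow_apply, Pi.natCast_apply]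
  split_ifs <;> ring

theorem Fe_of_le {i : ℕ} (h : l ≤ i) : Fe p l i = 0 := by
  funext j
  simp [Fe_apply, show min j l ≤ i by omega]

theorem Fe_mul_Fe_of_le {i i' : ℕ} (h : i ≤ i') :
    Fe p l i * Fe p l i' = (-(p : ℤ) ^ (l - i)) • Fe p l i' := by
  funext j
  simp only [Pi.mul_apply, Pi.smul_apply, smul_eq_mul, Fe_apply]
  split_ifs <;> first | (exfalso; omega) | ring

theorem Fe_apply_sub_apply_succ (i : ℕ) {j : ℕ} (hj : j < l) :
    Fe p l i j - Fe p l i (j + 1) = if i = j then (p : ℤ) ^ (l - j) else 0 := by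
  simp only [Fe_apply, min_eq_left hj.le, min_eq_left (Nat.succ_le_of_lt hj)]
  split_ifs <;> first | (exfalso; omega) | (subst_vars; ring)

theorem coe_Fb (p l i : ℕ) : (Fb p l i : ℕ → ℤ) = Fe p l i := by
  simp [Fb, Fe, Xb]

theorem Fb_of_le {i : ℕ} (h : l ≤ i) : Fb p l i = 0 :=
  Subtype.ext (by rw [coe_Fb, Fe_of_le h]; rfl)

def spanFe (p l : ℕ) : Submodule ℤ (ℕ → ℤ) :=
  Submodule.span ℤ (insert 1 (Set.range (Fe p l)))

theorem Fe_mem_spanFe (i : ℕ) : Fe p l i ∈ spanFe p l :=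
  Submodule.subset_span (Set.mem_insert_of_mem _ ⟨i, rfl⟩)

theorem one_mem_spanFe : (1 : ℕ → ℤ) ∈ spanFe p l :=
  Submodule.subset_span (Set.mem_insert _ _)

theorem mul_mem_spanFe {a b : ℕ → ℤ} (ha : a ∈ spanFe p l) (hb : b ∈ spanFe p l) :
    a * b ∈ spanFe p l := by
  have hab := Submodule.mul_mem_mul ha hb
  rw [spanFe, Submodule.span_mul_span] at hab
  refine Submodule.span_le.mpr (Set.mul_subset_iff.mpr ?_) hab
  rintro _ (rfl | ⟨i, rfl⟩) _ (rfl | ⟨i', rfl⟩)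
  · simpa using one_mem_spanFe
  · simpa using Fe_mem_spanFe i'
  · simpa using Fe_mem_spanFe i
  · rcases le_total i i' with h | h
    · rw [Fe_mul_Fe_of_le h]
      exact Submodule.smul_mem _ _ (Fe_mem_spanFe i')
    · rw [mul_comm, Fe_mul_Fe_of_le h]
      exact Submodule.smul_mem _ _ (Fe_mem_spanFe i)

theorem Xe_mem_spanFe (i : ℕ) : Xe p l i ∈ spanFe p l := by
  have hXe : Xe p l i = Fe p l i + ((p : ℤ) ^ (l - i)) • 1 := by
    funext j
    simp [Fe]
  rw [hXe]
  exact add_mem (Fe_mem_spanFe i) (Submodule.smul_mem _ _ one_mem_spanFe)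

theorem BR_le_spanFe : BR p l ≤ ((spanFe p l).toSubalgebra one_mem_spanFe
    fun _ _ => mul_mem_spanFe).toSubring :=
  Subring.closure_le.mpr (Set.range_subset_iff.mpr Xe_mem_spanFe)

theorem exists_eq_intCast_add_sum_Fb (x : BR p l) :
    ∃ (n : ℤ) (s : Finset ℕ) (d : ℕ → ℤ), x = n + ∑ i ∈ s, d i • Fb p l i := by
  obtain ⟨n, z, hz, hxz⟩ := Submodule.mem_span_insert.mp (BR_le_spanFe x.2)
  obtain ⟨d, rfl⟩ := Finsupp.mem_span_range_iff_exists_finsupp.mp hz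
  refine ⟨n, d.support, d, Subtype.ext ?_⟩
  rw [hxz]
  push_cast [coe_Fb]
  simp [Finsupp.sum, zsmul_eq_mul]

theorem coe_intCast_add_sum_Fb_apply (n : ℤ) (s : Finset ℕ) (d : ℕ → ℤ) (j : ℕ) :
    ((n + ∑ i ∈ s, d i • Fb p l i : BR p l) : ℕ → ℤ) j = n + ∑ i ∈ s, d i * Fe p l i j := by
  push_cast [coe_Fb]
  simp [Finset.sum_apply]

def markHom (p l j : ℕ) : BR p l →+* ℤ :=
  (Pi.evalRingHom (fun _ => ℤ) j).comp (BR p l).subtype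

@[simp]
theorem markHom_apply (j : ℕ) (x : BR p l) : markHom p l j x = (x : ℕ → ℤ) j :=
  rfl

theorem isMaximal_comap_markHom {q : ℤ} (hq : Prime q) (j : ℕ) :
    ((Ideal.span {q}).comap (markHom p l j)).IsMaximal := by
  have := PrincipalIdealRing.isMaximal_of_irreducible hq.irreducible
  refine Ideal.comap_isMaximal_of_surjective (markHom p l j) (K := Ideal.span {q}) fun n => ?_
  exact ⟨n, by simp⟩

variable {k : ℕ} {q : ℤ} {x : BR p l}

theorem dvd_apply_of_mem_Jb (hx : x ∈ Jb p l k q) {j : ℕ} (hj : j ≤ k) : q ∣ (x : ℕ → ℤ) j := by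
  suffices Jb p l k q ≤ (Ideal.span {q}).comap (markHom p l j) from
    Ideal.mem_span_singleton.mp (this hx)
  refine Ideal.span_le.mpr (Set.insert_subset_iff.mpr ⟨?_, ?_⟩)
  · simp
  · rintro _ ⟨i, ⟨hki, -⟩, rfl⟩
    simp [coe_Fb, Fe_apply, show min j l ≤ i by omega]

theorem zsmul_mem_Jb_of_dvd {m : ℤ} (h : q ∣ m) (y : BR p l) : m • y ∈ Jb p l k q := by
  obtain ⟨c, rfl⟩ := h
  have hq : (q : BR p l) ∈ Jb p l k q := Ideal.subset_span (Set.mem_insert _ _)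
  simpa [mul_smul, zsmul_eq_mul] using Ideal.mul_mem_right (c • y) _ hq

theorem mem_Jb_of_dvd_apply (hqp : IsCoprime q p) (hx : ∀ j ≤ k, q ∣ (x : ℕ → ℤ) j) :
    x ∈ Jb p l k q := by
  obtain ⟨n, s, d, hxr⟩ := exists_eq_intCast_add_sum_Fb x
  have hmark (j : ℕ) : (x : ℕ → ℤ) j = n + ∑ i ∈ s, d i * Fe p l i j :=
    hxr ▸ coe_intCast_add_sum_Fb_apply n s d j
  rw [hxr]
  refine add_mem ?_ (sum_mem fun i hi => ?_)
  · have hn : q ∣ n := by simpa [hmark, Fe_apply] using hx 0 (Nat.zero_le k)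
    simpa using zsmul_mem_Jb_of_dvd hn (1 : BR p l)
  obtain hli | hil := le_or_gt l i
  · simp [Fb_of_le hli]
  rcases lt_or_ge i k with hik | hki
  · have hjump : (x : ℕ → ℤ) i - (x : ℕ → ℤ) (i + 1) = d i * (p : ℤ) ^ (l - i) := by
      rw [hmark, hmark, add_sub_add_left_eq_sub, ← Finset.sum_sub_distrib]
      simp_rw [← mul_sub, Fe_apply_sub_apply_succ _ hil, mul_ite, mul_zero]
      rw [Finset.sum_ite_eq' s i, if_pos hi]
    have hdi : q ∣ d i :=
      hqp.pow_right.dvd_of_dvd_mul_right (hjump ▸ dvd_sub (hx i hik.le) (hx (i + 1) hik))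
    exact zsmul_mem_Jb_of_dvd hdi _
  · have hFb : Fb p l i ∈ Jb p l k q :=
      Ideal.subset_span (Set.mem_insert_of_mem _ ⟨i, ⟨hki, hil⟩, rfl⟩)
    exact Submodule.smul_of_tower_mem _ _ hFb

theorem mem_Jb_iff (hqp : IsCoprime q p) :
    x ∈ Jb p l k q ↔ ∀ j ≤ k, q ∣ (x : ℕ → ℤ) j :=
  ⟨fun hx _ hj => dvd_apply_of_mem_Jb hx hj, mem_Jb_of_dvd_apply hqp⟩

theorem Jb_succ_eq_inf (hqp : IsCoprime q p) :
    Jb p l (k + 1) q = Jb p l k q ⊓ (Ideal.span {q}).comap (markHom p l (k + 1)) := by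
  ext x
  simp only [Submodule.mem_inf, mem_Jb_iff hqp, Ideal.mem_comap, Ideal.mem_span_singleton,
    markHom_apply, Nat.le_succ_iff, or_imp, forall_and, forall_eq]

end BurnsideRing

theorem no_ideal_between_Jq_general (p q l k : ℕ) (hp : p.Prime) (hq : q.Prime) (hpq : q ≠ p)
    (I : Ideal (BR p l))
    (h1 : Jb p l (k+1) (q : ℤ) ≤ I) (h2 : I ≤ Jb p l k (q : ℤ)) :
    I = Jb p l (k+1) (q : ℤ) ∨ I = Jb p l k (q : ℤ) := by
  have hqp : IsCoprime (q : ℤ) p :=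
    Nat.isCoprime_iff_coprime.mpr ((Nat.coprime_primes hq hp).mpr hpq)
  rw [Jb_succ_eq_inf hqp] at h1 ⊢
  exact (isMaximal_comap_markHom (Nat.prime_iff_prime_int.mp hq) (k + 1)).eq_inf_or_eq_of_le h1 h2

/-- For a prime `q ≠ p`, there is no ideal of `R_ℓ` strictly between
`J_{ℓ,k+1}(q)` and `J_{ℓ,k}(q)`. -/
theorem no_ideal_between_Jq (p q l k : ℕ) (hp : p.Prime) (hq : q.Prime) (hpq : q ≠ p)
    (hl : 1 ≤ l) (hk : k ≤ l - 1) (I : Ideal (BR p l))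
    (h1 : Jb p l (k+1) (q : ℤ) ≤ I) (h2 : I ≤ Jb p l k (q : ℤ)) :
    I = Jb p l (k+1) (q : ℤ) ∨ I = Jb p l k (q : ℤ) :=
  no_ideal_between_Jq_general p q l k hp hq hpq I h1 h2
end

section
/- Let $p$ be a prime and $\ell \ge 1$, $0 \le k \le \ell - 1$. In the Burnside ring $R_\ell$ of $C_{p^\ell}$, any ideal $I$ with $J_{\ell,k+1}(0) \subseteq I \subseteq J_{\ell,k}(0)$ is of the form $I = J_{\ell,k+1}(0) + (n F_{\ell,k})$ for some $n \in \mathbb{Z}$, i.e., $I = (nF_{\ell,k}, F_{\ell,k+1}, \ldots, F_{\ell,\ell-1})$. -/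
/-! Every element of `J_{ℓ,k}(0)` is `n F_{ℓ,k}` plus an element of `J_{ℓ,k+1}(0)` with `n ∈ ℤ`:
the ideal generated by `F_{ℓ,k}` adds nothing more, because `X_{ℓ,j} F_{ℓ,k}` is `0` for `j ≤ k` and
`p^{ℓ-j} F_{ℓ,k} - p^{ℓ-k} F_{ℓ,j}` for `j > k`, and the `X_{ℓ,j}` generate `R_ℓ`. Hence an ideal
`I` between `J_{ℓ,k+1}(0)` and `J_{ℓ,k}(0)` is determined by the subgroup `{n | n F_{ℓ,k} ∈ I}` of
`ℤ`, which is cyclic. -/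

theorem Subring.exists_zsmul_sub_mem_of_mem_closure {R : Type*} [CommRing R] {J : Ideal R}
    {f : R} {s : Set R} (hs : ∀ x ∈ s, ∃ n : ℤ, x * f - n • f ∈ J) {r : R}
    (hr : r ∈ Subring.closure s) : ∃ n : ℤ, r * f - n • f ∈ J := by
  induction hr using Subring.closure_induction with
  | mem x hx => exact hs x hx
  | zero => exact ⟨0, by simp⟩
  | one => exact ⟨1, by simp⟩
  | add a b _ _ ha hb =>
    obtain ⟨m, hm⟩ := ha
    obtain ⟨n, hn⟩ := hb
    refine ⟨m + n, ?_⟩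
    convert add_mem hm hn using 1
    rw [add_smul]; ring
  | neg a _ ha =>
    obtain ⟨m, hm⟩ := ha
    refine ⟨-m, ?_⟩
    convert neg_mem hm using 1
    rw [neg_smul]; ring
  | mul a b _ _ ha hb =>
    obtain ⟨m, hm⟩ := ha
    obtain ⟨n, hn⟩ := hb
    refine ⟨n * m, ?_⟩
    convert add_mem (J.mul_mem_left a hn) (J.mul_mem_left (n : R) hm) using 1
    simp only [mul_smul, zsmul_eq_mul]; ring

theorem Ideal.exists_zsmul_sub_mem_of_mem_sup_span_singleton {R : Type*} [CommRing R]
    {J : Ideal R} {f : R} {s : Set R} (hs : Subring.closure s = ⊤)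
    (hsf : ∀ x ∈ s, ∃ n : ℤ, x * f - n • f ∈ J) {x : R} (hx : x ∈ J ⊔ Ideal.span {f}) :
    ∃ n : ℤ, x - n • f ∈ J := by
  obtain ⟨y, hy, z, hz, rfl⟩ := Submodule.mem_sup.1 hx
  obtain ⟨r, rfl⟩ := Ideal.mem_span_singleton'.1 hz
  obtain ⟨n, hn⟩ := Subring.exists_zsmul_sub_mem_of_mem_closure hsf (hs ▸ Subring.mem_top r)
  exact ⟨n, by simpa only [add_sub_assoc] using add_mem hy hn⟩

section BurnsideRing

variable {p l : ℕ}

theorem closure_range_Xb : Subring.closure (Set.range (Xb p l)) = ⊤ := by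
  refine (Subring.eq_top_iff' _).2 fun ⟨x, hx⟩ => ?_
  induction hx using Subring.closure_induction with
  | mem _ h => obtain ⟨i, rfl⟩ := h; exact Subring.subset_closure ⟨i, rfl⟩
  | zero => exact zero_mem _
  | one => exact one_mem _
  | add _ _ _ _ ha hb => exact add_mem ha hb
  | neg _ _ ha => exact neg_mem ha
  | mul _ _ _ _ ha hb => exact mul_mem ha hb

theorem coe_Xb_apply (i j : ℕ) :
    (Xb p l i : ℕ → ℤ) j = if min j l ≤ i then (p : ℤ) ^ (l - i) else 0 := rfl

theorem coe_Fb_apply (i j : ℕ) :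
    (Fb p l i : ℕ → ℤ) j = (if min j l ≤ i then (p : ℤ) ^ (l - i) else 0) - (p : ℤ) ^ (l - i) := by
  simp [Fb, Xb, Xe]

theorem Fb_eq_zero_of_le {i : ℕ} (hi : l ≤ i) : Fb p l i = 0 := by
  ext j
  simp [coe_Fb_apply, (min_le_right j l).trans hi]

theorem Fb_mem_Jb {k i : ℕ} (hki : k ≤ i) (x : ℤ) : Fb p l i ∈ Jb p l k x := by
  rcases lt_or_ge i l with hil | hli
  · exact Ideal.subset_span (Set.mem_insert_of_mem _ ⟨i, ⟨hki, hil⟩, rfl⟩)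
  · rw [Fb_eq_zero_of_le hli]; exact zero_mem _

theorem Xb_mul_Fb_of_le {j k : ℕ} (hjk : j ≤ k) : Xb p l j * Fb p l k = 0 := by
  ext m
  simp only [Subring.coe_mul, Pi.mul_apply, coe_Xb_apply, coe_Fb_apply, ZeroMemClass.coe_zero,
    Pi.zero_apply]
  split_ifs <;> omega

theorem Xb_mul_Fb_of_lt {j k : ℕ} (hkj : k < j) :
    Xb p l j * Fb p l k = (p : ℤ) ^ (l - j) • Fb p l k - (p : ℤ) ^ (l - k) • Fb p l j := by
  ext m
  simp only [Subring.coe_mul, AddSubgroupClass.coe_sub, zsmul_eq_mul, Int.cast_pow,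
    Int.cast_natCast, SubmonoidClass.coe_pow, SubringClass.coe_natCast, Pi.mul_apply, Pi.sub_apply,
    Pi.pow_apply, Pi.natCast_apply, coe_Xb_apply, coe_Fb_apply]
  split_ifs <;> first | omega | ring

theorem exists_Xb_mul_Fb_sub_zsmul_mem_Jb (j k : ℕ) :
    ∃ n : ℤ, Xb p l j * Fb p l k - n • Fb p l k ∈ Jb p l (k + 1) 0 := by
  rcases le_or_gt j k with hjk | hkj
  · exact ⟨0, by simp [Xb_mul_Fb_of_le hjk]⟩
  · refine ⟨(p : ℤ) ^ (l - j), ?_⟩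
    simpa [Xb_mul_Fb_of_lt hkj] using
      Ideal.mul_mem_left _ (-(p : ℤ) ^ (l - k) : BR p l) (Fb_mem_Jb hkj 0)

theorem Jb_zero_le_sup_span_Fb (k : ℕ) :
    Jb p l k 0 ≤ Jb p l (k + 1) 0 ⊔ Ideal.span {Fb p l k} := by
  refine Ideal.span_le.2 ?_
  rintro _ (rfl | ⟨i, ⟨hki, -⟩, rfl⟩)
  · simp
  · rcases hki.eq_or_lt with rfl | hki
    · exact Ideal.mem_sup_right (Ideal.mem_span_singleton_self _)
    · exact Ideal.mem_sup_left (Fb_mem_Jb hki 0)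

theorem exists_zsmul_sub_mem_Jb_succ {k : ℕ} {x : BR p l} (hx : x ∈ Jb p l k 0) :
    ∃ n : ℤ, x - n • Fb p l k ∈ Jb p l (k + 1) 0 :=
  Ideal.exists_zsmul_sub_mem_of_mem_sup_span_singleton closure_range_Xb
    (by rintro _ ⟨j, rfl⟩; exact exists_Xb_mul_Fb_sub_zsmul_mem_Jb j k)
    (Jb_zero_le_sup_span_Fb k hx)

end BurnsideRing

theorem ideal_between_J0_general (p l k : ℕ)
    (I : Ideal (BR p l)) (h1 : Jb p l (k+1) 0 ≤ I) (h2 : I ≤ Jb p l k 0) :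
    ∃ n : ℤ, I = Jb p l (k+1) 0 ⊔ Ideal.span {n • Fb p l k} := by
  obtain ⟨n₀, hN⟩ := Int.subgroup_cyclic (I.toAddSubgroup.comap (zmultiplesHom _ (Fb p l k)))
  have hmem (n : ℤ) : n • Fb p l k ∈ I ↔ n ∈ AddSubgroup.closure {n₀} := by
    rw [← hN]; rfl
  refine ⟨n₀, le_antisymm (fun x hx => ?_) (sup_le h1 ?_)⟩
  · obtain ⟨n, hn⟩ := exists_zsmul_sub_mem_Jb_succ (h2 hx)
    obtain ⟨c, rfl⟩ := AddSubgroup.mem_closure_singleton.1 <|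
      (hmem n).1 (by simpa using sub_mem hx (h1 hn))
    have hx : x = (x - (c • n₀) • Fb p l k) + (c : BR p l) * (n₀ • Fb p l k) := by
      rw [← zsmul_eq_mul, smul_smul, smul_eq_mul]; abel
    rw [hx]
    exact add_mem (Ideal.mem_sup_left hn)
      (Ideal.mem_sup_right (Ideal.mul_mem_left _ _ (Ideal.mem_span_singleton_self _)))
  · exact (Ideal.span_singleton_le_iff_mem _).2 <|
      (hmem n₀).2 (AddSubgroup.mem_closure_singleton_self n₀)

/-- Any ideal `I` of `R_ℓ` with `J_{ℓ,k+1}(0) ⊆ I ⊆ J_{ℓ,k}(0)` is of the form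
`I = J_{ℓ,k+1}(0) + (n F_{ℓ,k})` for some `n ∈ ℤ`. -/
theorem ideal_between_J0 (p l k : ℕ) (hp : p.Prime) (hl : 1 ≤ l) (hk : k ≤ l - 1)
    (I : Ideal (BR p l)) (h1 : Jb p l (k+1) 0 ≤ I) (h2 : I ≤ Jb p l k 0) :
    ∃ n : ℤ, I = Jb p l (k+1) 0 ⊔ Ideal.span {n • Fb p l k} :=
  ideal_between_J0_general p l k I h1 h2
end
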